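/- Let K ⊆ ℝⁿ be nonempty, compact, and convex, and F : ℝⁿ → ℝⁿ continuously differentiable and monotone on K, with SOL(K,F) nonempty. Let x : [0, ∞) → ℝⁿ be locally Lipschitz with x(t) ∈ K for all t ≥ 0, such that for almost every t ≥ 0 there exists b(t) ∈ argmin_{y∈K} ⟨y, F(x(t))⟩ with x′(t) = b(t) − x(t). Then dist(x(t), SOL(K,F)) → 0 as t → ∞. -/

import Mathlib

open scoped InnerProductSpace
open MeasureTheory

/-!
The Lyapunov function is the gap `V(u) = ⟪u, F u⟫ - min_{y ∈ K} ⟪y, F u⟫ ≥ 0`, which vanishes on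
`K` exactly at the solutions of the variational inequality. Along the best response dynamics,
`V(x(s)) ≥ ⟪x(s) - b, F(x(s))⟫` with equality at `s = t`, so both sides have the same derivative
at `t`; monotonicity makes `DF` positive semidefinite along `K`, which turns this into
`(V ∘ x)' ≤ -V ∘ x`. Since `V ∘ x` is locally Lipschitz, hence absolutely continuous, Grönwall
gives `V(x(t)) ≤ e^{-t} V(x(0)) → 0`, and compactness of `K` converts this into
`dist(x(t), SOL) → 0`.
-/

open Set Filter Topology Metric Real

lemma LocallyLipschitz.absolutelyContinuousOnInterval {X : Type*} [PseudoMetricSpace X]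
    {f : ℝ → X} (hf : LocallyLipschitz f) (a b : ℝ) : AbsolutelyContinuousOnInterval f a b := by
  obtain ⟨C, hC⟩ := hf.locallyLipschitzOn.exists_lipschitzOnWith_of_compact isCompact_uIcc
  exact hC.absolutelyContinuousOnInterval

lemma AbsolutelyContinuousOnInterval.exp_mul_le_of_deriv_le_neg {V : ℝ → ℝ} {a b : ℝ}
    (hab : a ≤ b) (hV : AbsolutelyContinuousOnInterval V a b)
    (hd : ∀ᵐ t, t ∈ Ioo a b → DifferentiableAt ℝ V t → deriv V t ≤ -V t) :
    exp b * V b ≤ exp a * V a := by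
  have hexp : AbsolutelyContinuousOnInterval exp a b :=
    contDiff_exp.contDiffOn.absolutelyContinuousOnInterval
  have hint : 0 ≤ ∫ t in a..b, -(deriv exp t * V t + exp t * deriv V t) := by
    refine intervalIntegral.integral_nonneg_of_ae_restrict hab ?_
    rw [Measure.restrict_congr_set Ioo_ae_eq_Icc.symm, EventuallyLE,
      ae_restrict_iff' measurableSet_Ioo]
    filter_upwards [hV.ae_differentiableAt, hd] with t hdiff hdt ht
    have := hdt ht (hdiff (Ioo_subset_Icc_self.trans Icc_subset_uIcc ht))
    have := exp_pos t
    simp only [Pi.zero_apply, Real.deriv_exp]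
    nlinarith
  rw [intervalIntegral.integral_neg, hexp.integral_deriv_mul_eq_sub hV] at hint
  linarith

lemma tendsto_zero_of_deriv_le_neg {V : ℝ → ℝ} (hV : LocallyLipschitz V)
    (hnonneg : ∀ᶠ t in atTop, 0 ≤ V t)
    (hd : ∀ᵐ t, 0 < t → DifferentiableAt ℝ V t → deriv V t ≤ -V t) :
    Tendsto V atTop (𝓝 0) := by
  have hdecay : ∀ᶠ t in atTop, V t ≤ V 0 * exp (-t) := by
    filter_upwards [eventually_ge_atTop 0] with t ht
    have := (hV.absolutelyContinuousOnInterval 0 t).exp_mul_le_of_deriv_le_neg ht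
      (by filter_upwards [hd] with s hs hs' using hs hs'.1)
    rw [exp_zero, one_mul] at this
    rw [exp_neg, ← div_eq_mul_inv, le_div_iff₀ (exp_pos t), mul_comm]
    exact this
  have hlim : Tendsto (fun t => V 0 * exp (-t)) atTop (𝓝 0) := by
    simpa using tendsto_exp_neg_atTop_nhds_zero.const_mul (V 0)
  exact tendsto_of_tendsto_of_tendsto_of_le_of_le' tendsto_const_nhds hlim hnonneg hdecay

lemma tendsto_infDist_of_tendsto_comp {X α : Type*} [PseudoMetricSpace X] {l : Filter α}
    {K S : Set X} (hK : IsCompact K) {g : X → ℝ} (hg : ContinuousOn g K)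
    (hS : ∀ y ∈ K, g y ≤ 0 → y ∈ S) {u : α → X} (huK : ∀ᶠ t in l, u t ∈ K)
    (hu : Tendsto (fun t => g (u t)) l (𝓝 0)) :
    Tendsto (fun t => infDist (u t) S) l (𝓝 0) := by
  refine tendsto_order.2 ⟨fun a ha => Eventually.of_forall fun t => ha.trans_le infDist_nonneg,
    fun ε hε => ?_⟩
  set C := K ∩ {y | ε ≤ infDist y S}
  have hC : IsCompact C :=
    hK.inter_right (isClosed_le continuous_const (continuous_infDist_pt S))
  rcases C.eq_empty_or_nonempty with hCe | hCne
  · filter_upwards [huK] with t ht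
    by_contra! h
    exact hCe.subset ⟨ht, h⟩
  obtain ⟨y, hyC, hymin⟩ := hC.exists_isMinOn hCne (hg.mono inter_subset_left)
  have hpos : 0 < g y := by
    by_contra! h
    have hyε : ε ≤ infDist y S := hyC.2
    linarith [infDist_zero_of_mem (hS y hyC.1 h)]
  filter_upwards [huK, hu.eventually (gt_mem_nhds hpos)] with t htK htg
  by_contra! h
  exact (hymin ⟨htK, h⟩).not_gt htg

variable {E : Type*} [NormedAddCommGroup E] [InnerProductSpace ℝ E] {K : Set E}

noncomputable def minInner (K : Set E) (w : E) : ℝ :=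
  sInf ((fun y => ⟪y, w⟫_ℝ) '' K)

lemma minInner_le (hK : IsCompact K) (w : E) {y : E} (hy : y ∈ K) : minInner K w ≤ ⟪y, w⟫_ℝ :=
  csInf_le (hK.bddBelow_image (by fun_prop : Continuous fun y : E => ⟪y, w⟫_ℝ).continuousOn)
    ⟨y, hy, rfl⟩

lemma minInner_eq_of_forall_le {w b : E} (hb : b ∈ K) (hmin : ∀ z ∈ K, ⟪b, w⟫_ℝ ≤ ⟪z, w⟫_ℝ) :
    minInner K w = ⟪b, w⟫_ℝ :=
  IsLeast.csInf_eq ⟨⟨b, hb, rfl⟩, by rintro _ ⟨z, hz, rfl⟩; exact hmin z hz⟩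

lemma exists_minInner_eq (hK : IsCompact K) (hne : K.Nonempty) (w : E) :
    ∃ b ∈ K, minInner K w = ⟪b, w⟫_ℝ := by
  obtain ⟨b, hb, hmin⟩ :=
    hK.exists_isMinOn hne (by fun_prop : Continuous fun y : E => ⟪y, w⟫_ℝ).continuousOn
  exact ⟨b, hb, minInner_eq_of_forall_le hb fun z hz => hmin hz⟩

lemma lipschitzWith_minInner (hK : IsCompact K) (hne : K.Nonempty) {R : NNReal}
    (hR : ∀ y ∈ K, ‖y‖ ≤ R) : LipschitzWith R (minInner K) := by
  refine LipschitzWith.of_le_add_mul R fun w w' => ?_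
  obtain ⟨b, hb, hbw'⟩ := exists_minInner_eq hK hne w'
  calc minInner K w ≤ ⟪b, w⟫_ℝ := minInner_le hK w hb
    _ = ⟪b, w'⟫_ℝ + ⟪b, w - w'⟫_ℝ := by rw [inner_sub_right]; ring
    _ ≤ minInner K w' + R * dist w w' := by
        rw [hbw', dist_eq_norm]
        gcongr
        exact (real_inner_le_norm _ _).trans
          (mul_le_mul_of_nonneg_right (hR b hb) (norm_nonneg _))

noncomputable def viGap (K : Set E) (F : E → E) (u : E) : ℝ :=
  ⟪u, F u⟫_ℝ - minInner K (F u)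

variable {F : E → E}

lemma viGap_nonneg (hK : IsCompact K) {u : E} (hu : u ∈ K) : 0 ≤ viGap K F u :=
  sub_nonneg.2 (minInner_le hK _ hu)

lemma inner_sub_nonneg_of_viGap_nonpos (hK : IsCompact K) {u y : E} (hgap : viGap K F u ≤ 0)
    (hy : y ∈ K) : 0 ≤ ⟪y - u, F u⟫_ℝ := by
  have := minInner_le hK (F u) hy
  rw [viGap] at hgap
  rw [inner_sub_left]
  linarith

lemma inner_sub_le_viGap (hK : IsCompact K) {b : E} (hb : b ∈ K) (u : E) :
    ⟪u - b, F u⟫_ℝ ≤ viGap K F u := by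
  have := minInner_le hK (F u) hb
  rw [viGap, inner_sub_left]
  linarith

lemma viGap_eq_inner_sub {u b : E} (hb : b ∈ K) (hmin : ∀ z ∈ K, ⟪b, F u⟫_ℝ ≤ ⟪z, F u⟫_ℝ) :
    viGap K F u = ⟪u - b, F u⟫_ℝ := by
  rw [viGap, minInner_eq_of_forall_le hb hmin, inner_sub_left]

lemma locallyLipschitz_viGap (hK : IsCompact K) (hne : K.Nonempty) (hF : ContDiff ℝ 1 F) :
    LocallyLipschitz (viGap K F) := by
  obtain ⟨R, hR⟩ := hK.isBounded.exists_norm_le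
  have hminLip := lipschitzWith_minInner hK hne (R := R.toNNReal)
    fun y hy => (hR y hy).trans (le_coe_toNNReal R)
  exact (contDiff_id.inner ℝ hF).locallyLipschitz.sub
    (hminLip.locallyLipschitz.comp hF.locallyLipschitz)

lemma inner_fderiv_nonneg_of_monotoneOn (hKconv : Convex ℝ K)
    (hmono : ∀ u ∈ K, ∀ v ∈ K, 0 ≤ ⟪u - v, F u - F v⟫_ℝ) {u v : E}
    (hF : DifferentiableAt ℝ F u) (hu : u ∈ K) (hv : v ∈ K) :
    0 ≤ ⟪v - u, fderiv ℝ F u (v - u)⟫_ℝ := by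
  have hmin : IsLocalMinOn (fun z => ⟪v - u, F z⟫_ℝ) (segment ℝ u v) u := by
    refine IsMinOn.localize fun z hz => ?_
    have hzK := hKconv.segment_subset hu hv hz
    rw [segment_eq_image'] at hz
    obtain ⟨θ, ⟨hθ, -⟩, rfl⟩ := hz
    have h := hmono _ hzK u hu
    rw [add_sub_cancel_left, real_inner_smul_left, inner_sub_right] at h
    rcases hθ.eq_or_lt with rfl | hθ
    · simp
    · simp only [mem_ofPred_eq]
      nlinarith
  have hd := ((hasFDerivAt_const (v - u) u).inner ℝ hF.hasFDerivAt).hasFDerivWithinAt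
    (s := segment ℝ u v)
  simpa using hmin.hasFDerivWithinAt_nonneg hd
    (sub_mem_posTangentConeAt_of_segment_subset subset_rfl)

lemma deriv_viGap_comp_le (hK : IsCompact K) (hKconv : Convex ℝ K)
    (hmono : ∀ u ∈ K, ∀ v ∈ K, 0 ≤ ⟪u - v, F u - F v⟫_ℝ) {x : ℝ → E} {t : ℝ} {b : E}
    (hxt : x t ∈ K) (hb : b ∈ K) (hbmin : ∀ z ∈ K, ⟪b, F (x t)⟫_ℝ ≤ ⟪z, F (x t)⟫_ℝ)
    (hx : HasDerivAt x (b - x t) t) (hF : DifferentiableAt ℝ F (x t))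
    (hV : DifferentiableAt ℝ (fun s => viGap K F (x s)) t) :
    deriv (fun s => viGap K F (x s)) t ≤ -viGap K F (x t) := by
  have hφ : HasDerivAt (fun s => ⟪x s - b, F (x s)⟫_ℝ)
      (⟪x t - b, fderiv ℝ F (x t) (b - x t)⟫_ℝ + ⟪b - x t, F (x t)⟫_ℝ) t :=
    (hx.sub_const b).inner ℝ (hF.hasFDerivAt.comp_hasDerivAt t hx)
  have hmin : IsLocalMin (fun s => viGap K F (x s) - ⟪x s - b, F (x s)⟫_ℝ) t :=
    Eventually.of_forall fun s => by
      simp only [viGap_eq_inner_sub hb hbmin, sub_self]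
      exact sub_nonneg.2 (inner_sub_le_viGap hK hb _)
  have hderiv := hmin.hasDerivAt_eq_zero (hV.hasDerivAt.sub hφ)
  have hpsd := inner_fderiv_nonneg_of_monotoneOn hKconv hmono hF hxt hb
  rw [← neg_sub b (x t), inner_neg_left] at hderiv
  rw [viGap_eq_inner_sub hb hbmin, ← neg_sub b (x t), inner_neg_left]
  linarith

theorem stmt_6_general {n : ℕ} (K : Set (EuclideanSpace ℝ (Fin n)))
    (hKne : K.Nonempty) (hKcpt : IsCompact K) (hKconv : Convex ℝ K)
    (F : EuclideanSpace ℝ (Fin n) → EuclideanSpace ℝ (Fin n))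
    (hF : ContDiff ℝ 1 F)
    (hmono : ∀ u ∈ K, ∀ v ∈ K, 0 ≤ ⟪u - v, F u - F v⟫_ℝ)
    (SOL : Set (EuclideanSpace ℝ (Fin n)))
    (hSOL : SOL = {z | z ∈ K ∧ ∀ y ∈ K, 0 ≤ ⟪y - z, F z⟫_ℝ})
    (x : ℝ → EuclideanSpace ℝ (Fin n))
    (hlip : LocallyLipschitz x) (hxK : ∀ t ≥ (0:ℝ), x t ∈ K)
    (hdyn : ∀ᵐ t ∂(volume.restrict (Set.Ici (0:ℝ))),
      ∃ b, (b ∈ K ∧ ∀ z ∈ K, ⟪b, F (x t)⟫_ℝ ≤ ⟪z, F (x t)⟫_ℝ) ∧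
        HasDerivAt x (b - x t) t) :
    Filter.Tendsto (fun t => Metric.infDist (x t) SOL) Filter.atTop (nhds 0) := by
  have hgapLip := locallyLipschitz_viGap hKcpt hKne hF
  have hxK' : ∀ᶠ t in atTop, x t ∈ K := (eventually_ge_atTop 0).mono hxK
  have hdecay : ∀ᵐ t, 0 < t → DifferentiableAt ℝ (fun s => viGap K F (x s)) t →
      deriv (fun s => viGap K F (x s)) t ≤ -viGap K F (x t) := by
    filter_upwards [(ae_restrict_iff' measurableSet_Ici).1 hdyn] with t ht htpos hdiff
    obtain ⟨b, ⟨hb, hbmin⟩, hx⟩ := ht htpos.le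
    exact deriv_viGap_comp_le hKcpt hKconv hmono (hxK t htpos.le) hb hbmin hx
      (hF.differentiable one_ne_zero _) hdiff
  have hgap : Tendsto (fun t => viGap K F (x t)) atTop (𝓝 0) :=
    tendsto_zero_of_deriv_le_neg (hgapLip.comp hlip)
      (hxK'.mono fun t ht => viGap_nonneg hKcpt ht) hdecay
  subst hSOL
  refine tendsto_infDist_of_tendsto_comp hKcpt hgapLip.continuous.continuousOn ?_ hxK' hgap
  exact fun y hy h => ⟨hy, fun z hz => inner_sub_nonneg_of_viGap_nonpos hKcpt h hz⟩

/-- Convergence of best response dynamics to the solution set of the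
variational inequality: for `K` nonempty compact convex, `F` continuously differentiable
and monotone on `K` with `SOL(K,F)` nonempty, any locally Lipschitz trajectory staying in
`K` and satisfying the best response dynamics a.e. has `dist(x(t), SOL(K,F)) → 0`. -/
theorem stmt_6 {n : ℕ} (K : Set (EuclideanSpace ℝ (Fin n)))
    (hKne : K.Nonempty) (hKcpt : IsCompact K) (hKconv : Convex ℝ K)
    (F : EuclideanSpace ℝ (Fin n) → EuclideanSpace ℝ (Fin n))
    (hF : ContDiff ℝ 1 F)
    (hmono : ∀ u ∈ K, ∀ v ∈ K, 0 ≤ ⟪u - v, F u - F v⟫_ℝ)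
    (SOL : Set (EuclideanSpace ℝ (Fin n)))
    (hSOL : SOL = {z | z ∈ K ∧ ∀ y ∈ K, 0 ≤ ⟪y - z, F z⟫_ℝ})
    (hSOLne : SOL.Nonempty)
    (x : ℝ → EuclideanSpace ℝ (Fin n))
    (hlip : LocallyLipschitz x) (hxK : ∀ t ≥ (0:ℝ), x t ∈ K)
    (hdyn : ∀ᵐ t ∂(volume.restrict (Set.Ici (0:ℝ))),
      ∃ b, (b ∈ K ∧ ∀ z ∈ K, ⟪b, F (x t)⟫_ℝ ≤ ⟪z, F (x t)⟫_ℝ) ∧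
        HasDerivAt x (b - x t) t) :
    Filter.Tendsto (fun t => Metric.infDist (x t) SOL) Filter.atTop (nhds 0) :=
  stmt_6_general K hKne hKcpt hKconv F hF hmono SOL hSOL x hlip hxK hdyn
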